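/- arXiv:0812.0870 — 2 statements merged into one kernel-verified Lean document; each statement's English description precedes it below -/
import Mathlib

section
/- The simple graph G on vertex set {1,2,3,4,5,6,7} with edge set {{1,2},{1,3},{1,7},{2,4},{2,6},{2,7},{3,4},{3,6},{3,7},{4,5},{5,6}} (graph number 873 in the Atlas of Graphs) has minimum rank 3 over the real numbers. -/
/-!
Lower bound: in 1-based labels, 5 – 4 – 2 – 7 is a path of the graph with 5 ≁ 2, 5 ≁ 7 and 4 ≁ 7,
so in every matrix with the graph's pattern the minor on rows 5, 4, 2 and columns 4, 2, 7 is
triangular with nonzero diagonal, hence invertible.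
Upper bound: the Gram matrix of seven suitable integer vectors in ℝ³ has the graph's pattern.
-/

/-- Edge list of graph number 873 in the Atlas of Graphs (vertices 1..7). -/
def atlas873Edges : List (ℕ × ℕ) := [(1,2),(1,3),(1,7),(2,4),(2,6),(2,7),(3,4),(3,6),(3,7),(4,5),(5,6)]

open scoped Matrix

namespace Matrix

variable {K m n k : Type*} [Field K] [Fintype n] [Fintype k] [DecidableEq k]

theorem card_le_rank_of_det_submatrix_ne_zero (A : Matrix m n K) (r : k → m) (c : k → n)
    (h : (A.submatrix r c).det ≠ 0) : Fintype.card k ≤ A.rank := by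
  rw [← rank_of_isUnit _ ((isUnit_iff_isUnit_det _).2 h.isUnit)]
  exact rank_submatrix_le A r c

theorem card_le_rank_of_isLowerTriangular_submatrix [LinearOrder k] (A : Matrix m n K)
    (r : k → m) (c : k → n) (hlow : (A.submatrix r c).IsLowerTriangular)
    (hdiag : ∀ i, A (r i) (c i) ≠ 0) : Fintype.card k ≤ A.rank :=
  card_le_rank_of_det_submatrix_ne_zero A r c <| by
    rw [det_of_isLowerTriangular _ hlow]
    exact Finset.prod_ne_zero_iff.2 fun i _ => hdiag i

end Matrix

def IsAtlas873Pattern {R : Type*} [Zero R] (A : Matrix (Fin 7) (Fin 7) R) : Prop :=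
  ∀ i j : Fin 7, i ≠ j →
    (A i j ≠ 0 ↔
      ((i.val + 1, j.val + 1) ∈ atlas873Edges ∨ (j.val + 1, i.val + 1) ∈ atlas873Edges))

theorem IsAtlas873Pattern.map {R S : Type*} [Zero R] [Zero S] {A : Matrix (Fin 7) (Fin 7) R}
    (hA : IsAtlas873Pattern A) {f : R → S} (hf : ∀ x, f x = 0 ↔ x = 0) :
    IsAtlas873Pattern (A.map f) := fun i j hij => by
  rw [Matrix.map_apply, ne_eq, hf, ← ne_eq]
  exact hA i j hij

theorem IsAtlas873Pattern.three_le_rank {K : Type*} [Field K] {A : Matrix (Fin 7) (Fin 7) K}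
    (hA : IsAtlas873Pattern A) : 3 ≤ A.rank := by
  simpa using A.card_le_rank_of_isLowerTriangular_submatrix ![4, 3, 1] ![3, 1, 6]
    (fun i j hij => by
      fin_cases i <;> fin_cases j <;>
        first
        | exact absurd hij (by decide)
        | exact not_not.1 (mt (hA _ _ (by decide)).1 (by decide)))
    (fun i => by fin_cases i <;> exact (hA _ _ (by decide)).2 (by decide))

def atlas873GramFactor : Matrix (Fin 3) (Fin 7) ℤ :=
  !![0,  1,  1, 1, 1, 0, 0;
     0, -1, -1, 0, 1, 1, 0;
     1,  1, -2, 0, 0, 0, 1]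

theorem isAtlas873Pattern_gram : IsAtlas873Pattern (atlas873GramFactorᵀ * atlas873GramFactor) := by
  unfold IsAtlas873Pattern
  decide

theorem isAtlas873Pattern_gram_cast :
    IsAtlas873Pattern
      ((atlas873GramFactor.map ((↑) : ℤ → ℝ))ᵀ * atlas873GramFactor.map ((↑) : ℤ → ℝ)) := by
  convert isAtlas873Pattern_gram.map (f := ((↑) : ℤ → ℝ)) fun _ => Int.cast_eq_zero using 1
  exact (Matrix.map_mul (f := Int.castRingHom ℝ)).symm

/-- Graph number 873 in the Atlas of Graphs has minimum rank 3 over the reals: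
3 is the least element of the set of ranks of real symmetric 7×7 matrices whose
off-diagonal zero/nonzero pattern matches the edges of the graph. -/
theorem atlas873_minRank_eq_three :
    IsLeast {r : ℕ | ∃ A : Matrix (Fin 7) (Fin 7) ℝ, A.IsSymm ∧
        (∀ i j : Fin 7, i ≠ j →
          (A i j ≠ 0 ↔
            ((i.val + 1, j.val + 1) ∈ atlas873Edges ∨
             (j.val + 1, i.val + 1) ∈ atlas873Edges))) ∧
        A.rank = r} 3 := by
  refine ⟨?_, fun r ⟨A, _, hA, hr⟩ => hr ▸ IsAtlas873Pattern.three_le_rank hA⟩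
  set B := atlas873GramFactor.map ((↑) : ℤ → ℝ)
  have hrank : (Bᵀ * B).rank ≤ 3 := B.rank_transpose_mul_self ▸ B.rank_le_height
  exact ⟨Bᵀ * B, Matrix.transpose_mul _ _, isAtlas873Pattern_gram_cast,
    le_antisymm hrank isAtlas873Pattern_gram_cast.three_le_rank⟩
end

section
/- The simple graph G on vertex set {1,2,3,4,5,6,7} with edge set {{1,2},{1,4},{1,5},{1,6},{1,7},{2,3},{2,6},{3,4},{4,6},{5,6},{5,7},{6,7}} (graph number 956 in the Atlas of Graphs) has minimum rank 3 over the real numbers. -/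
/-- Edge list of graph number 956 in the Atlas of Graphs (vertices 1..7). -/
def atlas956Edges : List (ℕ × ℕ) := [(1,2),(1,4),(1,5),(1,6),(1,7),(2,3),(2,6),(3,4),(4,6),(5,6),(5,7),(6,7)]

/-!
Lower bound: rows {2, 7, 3} and columns {6, 5, 4} (atlas labels; the `Fin 7` indices are one
less) of any matrix with the zero pattern of the graph form a lower triangular 3 × 3 submatrix
whose diagonal entries sit on the edges 26, 75, 34, so they are nonzero; the row and column index
sets are disjoint, so no free diagonal entry enters.
Upper bound: the Gram matrix of seven vectors in ℝ³ whose inner products vanish exactly on the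
non-edges has the required pattern and rank at most 3.
-/

open Matrix

theorem Matrix.card_le_rank_of_det_submatrix_ne_zero_s15 {m n ι K : Type*} [Fintype n] [Fintype ι]
    [DecidableEq ι] [Field K] (A : Matrix m n K) (r : ι → m) (c : ι → n)
    (h : (A.submatrix r c).det ≠ 0) : Fintype.card ι ≤ A.rank := by
  have hunit : IsUnit (A.submatrix r c) := (isUnit_iff_isUnit_det _).mpr h.isUnit
  calc Fintype.card ι = (A.submatrix r c).rank := (rank_of_isUnit _ hunit).symm
    _ ≤ A.rank := rank_submatrix_le A r c

namespace Atlas956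

def Adj (i j : Fin 7) : Prop :=
  (i.val + 1, j.val + 1) ∈ atlas956Edges ∨ (j.val + 1, i.val + 1) ∈ atlas956Edges

instance : DecidableRel Adj := fun _ _ => inferInstanceAs (Decidable (_ ∨ _))

def HasPattern (A : Matrix (Fin 7) (Fin 7) ℝ) : Prop :=
  ∀ i j : Fin 7, i ≠ j → (A i j ≠ 0 ↔ Adj i j)

theorem three_le_rank_of_hasPattern {A : Matrix (Fin 7) (Fin 7) ℝ} (hA : HasPattern A) : 3 ≤ A.rank := by
  have edge : ∀ i j, i ≠ j → Adj i j → A i j ≠ 0 := fun i j hij => (hA i j hij).mpr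
  have nonedge : ∀ i j, i ≠ j → ¬Adj i j → A i j = 0 := fun i j hij => by
    simpa only [not_not] using mt (hA i j hij).mp
  have hdet : (A.submatrix ![1, 6, 2] ![5, 4, 3]).det ≠ 0 := by
    rw [det_fin_three]
    simp only [submatrix_apply, cons_val_zero, cons_val_one, cons_val_two, head_cons, tail_cons,
      nonedge 1 4 (by decide) (by decide), nonedge 1 3 (by decide) (by decide),
      nonedge 6 3 (by decide) (by decide), nonedge 2 5 (by decide) (by decide),
      nonedge 2 4 (by decide) (by decide), mul_zero, zero_mul, sub_zero, add_zero]
    exact mul_ne_zero (mul_ne_zero (edge 1 5 (by decide) (by decide))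
      (edge 6 4 (by decide) (by decide))) (edge 2 3 (by decide) (by decide))
  simpa using card_le_rank_of_det_submatrix_ne_zero_s15 A _ _ hdet

def gramFactor : Matrix (Fin 7) (Fin 3) ℝ :=
  !![1, -1, 1; 1, 0, 0; 1, 1, 0; 0, 1, 0; 0, 0, 1; 1, -1, 1; 0, 0, 1]

theorem hasPattern_gram : HasPattern (gramFactor * gramFactorᵀ) := by
  intro i j hij
  fin_cases i <;> fin_cases j <;>
    simp [Adj, atlas956Edges, gramFactor, mul_apply, Fin.sum_univ_three] at hij ⊢ <;> norm_num

theorem rank_gram_le_three : (gramFactor * gramFactorᵀ).rank ≤ 3 :=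
  (rank_mul_le_left _ _).trans (rank_le_width _)

theorem isSymm_gram : (gramFactor * gramFactorᵀ).IsSymm :=
  transpose_mul _ _

end Atlas956

open Atlas956 in
/-- Graph number 956 in the Atlas of Graphs has minimum rank 3 over the reals:
3 is the least element of the set of ranks of real symmetric 7×7 matrices whose
off-diagonal zero/nonzero pattern matches the edges of the graph. -/
theorem atlas956_minRank_eq_three :
    IsLeast {r : ℕ | ∃ A : Matrix (Fin 7) (Fin 7) ℝ, A.IsSymm ∧
        (∀ i j : Fin 7, i ≠ j →
          (A i j ≠ 0 ↔
            ((i.val + 1, j.val + 1) ∈ atlas956Edges ∨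
             (j.val + 1, i.val + 1) ∈ atlas956Edges))) ∧
        A.rank = r} 3 := by
  refine ⟨⟨gramFactor * gramFactorᵀ, isSymm_gram, hasPattern_gram, ?_⟩, ?_⟩
  · exact le_antisymm rank_gram_le_three (three_le_rank_of_hasPattern hasPattern_gram)
  · rintro r ⟨A, -, hA, rfl⟩
    exact three_le_rank_of_hasPattern hA
end
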